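/- The Hessian matrix (σᵢⱼ) of the surface tension σ is positive definite at every point of the open triangle T. -/

import Mathlib

/-!
Write `A = πρ₁`, `B = πρ₂`, `C = π(1 - ρ₁ - ρ₂)`: these are the angles of a triangle, so their
sines are positive and `cot A cot B + cot B cot C + cot C cot A = 1`. Hence the Hessian
`π • !![cot A + cot C, cot C; cot C, cot B + cot C]` has determinant `π²`, and its top-left
entry is `π sin B / (sin A sin C) > 0`; a symmetric `2 × 2` matrix with these two properties is
positive definite, by completing the square.
-/

open Real

lemma Matrix.posDef_fin_two_of_pos_of_det_pos {K : Type*} [Field K] [LinearOrder K]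
    [IsStrictOrderedRing K] [StarRing K] [TrivialStar K] {a b d : K}
    (ha : 0 < a) (hdet : 0 < a * d - b ^ 2) : (!![a, b; b, d]).PosDef := by
  rw [Matrix.posDef_iff_dotProduct_mulVec]
  refine ⟨?_, fun x hx => ?_⟩
  · rw [Matrix.IsHermitian, Matrix.conjTranspose_eq_transpose_of_trivial]
    ext i j
    fin_cases i <;> fin_cases j <;> rfl
  have hx' : x 0 ≠ 0 ∨ x 1 ≠ 0 := by
    by_contra! h
    exact hx (funext fun i => by fin_cases i <;> simp [h.1, h.2])
  simp only [star_trivial, dotProduct, Matrix.mulVec, Fin.sum_univ_two, Matrix.cons_val_zero,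
    Matrix.cons_val_one, Matrix.of_apply, Matrix.cons_val', Matrix.empty_val',
    Matrix.cons_val_fin_one]
  have hsq : a * (x 0 * (a * x 0 + b * x 1) + x 1 * (b * x 0 + d * x 1)) =
      (a * x 0 + b * x 1) ^ 2 + (a * d - b ^ 2) * x 1 ^ 2 := by ring
  refine pos_of_mul_pos_right (hsq ▸ ?_) ha.le
  by_cases h1 : x 1 = 0
  · have h0 : x 0 ≠ 0 := hx'.resolve_right (not_not.mpr h1)
    simp only [h1, mul_zero, add_zero, ne_eq, OfNat.ofNat_ne_zero, not_false_eq_true,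
      zero_pow]
    positivity
  · positivity

namespace Real

lemma cot_add_cot {x y : ℝ} (hx : sin x ≠ 0) (hy : sin y ≠ 0) :
    cot x + cot y = sin (x + y) / (sin x * sin y) := by
  rw [cot_eq_cos_div_sin, cot_eq_cos_div_sin, sin_add]
  field_simp
  ring

lemma cot_mul_cot_add_cot_mul_cot_add_cot_mul_cot_of_add_eq_pi {x y z : ℝ}
    (hx : sin x ≠ 0) (hy : sin y ≠ 0) (hz : sin z ≠ 0) (hxyz : x + y + z = π) :
    cot x * cot y + cot y * cot z + cot z * cot x = 1 := by
  have hz_eq : z = π - (x + y) := by linarith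
  have hxy : sin (x + y) ≠ 0 := by rwa [hz_eq, sin_pi_sub] at hz
  have hcot_z : cot z = -cos (x + y) / sin (x + y) := by
    rw [hz_eq, cot_eq_cos_div_sin, sin_pi_sub, cos_pi_sub]
  calc cot x * cot y + cot y * cot z + cot z * cot x
      = cot x * cot y + cot z * (cot x + cot y) := by ring
    _ = (cos x * cos y - cos (x + y)) / (sin x * sin y) := by
        rw [hcot_z, cot_add_cot hx hy, cot_eq_cos_div_sin, cot_eq_cos_div_sin]
        field_simp
        ring
    _ = 1 := by rw [cos_add, sub_sub_cancel, div_self (mul_ne_zero hx hy)]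

lemma sin_pi_mul_pos {x : ℝ} (h0 : 0 < x) (h1 : x < 1) : 0 < sin (π * x) :=
  sin_pos_of_pos_of_lt_pi (by positivity) (by nlinarith [pi_pos])

end Real

theorem surfTen_hessian_posDef (ρ₁ ρ₂ : ℝ) (h1 : 0 < ρ₁) (h2 : 0 < ρ₂) (h12 : ρ₁ + ρ₂ < 1) :
    (!![π * Real.cot (π * ρ₁) + π * Real.cot (π * (1 - ρ₁ - ρ₂)),
        π * Real.cot (π * (1 - ρ₁ - ρ₂));
        π * Real.cot (π * (1 - ρ₁ - ρ₂)),
        π * Real.cot (π * ρ₂) + π * Real.cot (π * (1 - ρ₁ - ρ₂))] : Matrix (Fin 2) (Fin 2) ℝ).PosDef := by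
  have hA : 0 < sin (π * ρ₁) := sin_pi_mul_pos h1 (by linarith)
  have hB : 0 < sin (π * ρ₂) := sin_pi_mul_pos h2 (by linarith)
  have hC : 0 < sin (π * (1 - ρ₁ - ρ₂)) := sin_pi_mul_pos (by linarith) (by linarith)
  have hcot := cot_mul_cot_add_cot_mul_cot_add_cot_mul_cot_of_add_eq_pi hA.ne' hB.ne' hC.ne'
    (by ring)
  apply Matrix.posDef_fin_two_of_pos_of_det_pos
  · rw [← mul_add, cot_add_cot hA.ne' hC.ne',
      show π * ρ₁ + π * (1 - ρ₁ - ρ₂) = π - π * ρ₂ by ring, sin_pi_sub]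
    positivity
  · convert pow_pos pi_pos 2 using 1
    linear_combination π ^ 2 * hcot
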